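/- Let H be a structural matrix and Σ a symmetric positive definite m×m real matrix, and set P_{Σ⁻¹} = H(HᵀΣ⁻¹H)⁻¹HᵀΣ⁻¹. An m×m real matrix P is a projection matrix onto Im(H) (i.e., P² = P and the column space of P equals Im(H)) if and only if P = P_{Σ⁻¹} + HA for some n×m real matrix A satisfying AH = 0 (the n×n zero matrix). -/

import Mathlib

/-!
The weighted projector `P_{Σ⁻¹} = H L` with `L = (HᵀΣ⁻¹H)⁻¹HᵀΣ⁻¹` only matters through
`L H = 1`. For any left inverse `L` of `H`, a projection `P` onto `Im H` satisfies `P H = H` and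
`P = H (L P)`, so `P - H L = H (L P - L)` with `(L P - L) H = 0`. Conversely `P = H M` with
`M H = 1` is idempotent and has the same range as `H`.
-/

open Matrix

namespace Matrix

variable {l m n R : Type*} [Fintype m] [Fintype n]

section Semiring

variable [Semiring R]

lemma range_mulVec_mul_subset (H : Matrix l m R) (M : Matrix m n R) :
    Set.range (H * M).mulVec ⊆ Set.range H.mulVec := by
  rintro _ ⟨v, rfl⟩
  exact ⟨M *ᵥ v, by rw [mulVec_mulVec]⟩

lemma mul_eq_self_of_range_mulVec_subset {P : Matrix m m R} {H : Matrix m n R}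
    (hP : P * P = P) (h : Set.range H.mulVec ⊆ Set.range P.mulVec) : P * H = H := by
  refine ext_iff_mulVec.mpr fun v => ?_
  obtain ⟨w, hw⟩ := h ⟨v, rfl⟩
  rw [← mulVec_mulVec, ← hw, mulVec_mulVec, hP]

lemma mul_mul_eq_self_of_range_mulVec_subset [DecidableEq n] {P : Matrix m m R}
    {H : Matrix m n R} {L : Matrix n m R} (hLH : L * H = 1)
    (h : Set.range P.mulVec ⊆ Set.range H.mulVec) : H * (L * P) = P := by
  refine ext_iff_mulVec.mpr fun v => ?_
  obtain ⟨x, hx⟩ := h ⟨v, rfl⟩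
  rw [← mulVec_mulVec, ← mulVec_mulVec, ← hx, mulVec_mulVec, mulVec_mulVec,
    Matrix.mul_assoc, hLH, Matrix.mul_one]

lemma range_mulVec_mul_eq_of_mul_eq_one [DecidableEq n] {H : Matrix m n R}
    {M : Matrix n m R} (hMH : M * H = 1) :
    Set.range (H * M).mulVec = Set.range H.mulVec := by
  refine (range_mulVec_mul_subset H M).antisymm ?_
  calc Set.range H.mulVec = Set.range (H * M * H).mulVec := by
        rw [Matrix.mul_assoc, hMH, Matrix.mul_one]
    _ ⊆ Set.range (H * M).mulVec := range_mulVec_mul_subset _ _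

end Semiring

theorem mul_self_eq_and_range_mulVec_eq_iff [Ring R] [DecidableEq n] {P : Matrix m m R}
    {H : Matrix m n R} {L : Matrix n m R} (hLH : L * H = 1) :
    (P * P = P ∧ Set.range P.mulVec = Set.range H.mulVec) ↔
      ∃ A : Matrix n m R, A * H = 0 ∧ P = H * L + H * A := by
  constructor
  · rintro ⟨hPP, hran⟩
    have hPH : P * H = H := mul_eq_self_of_range_mulVec_subset hPP hran.ge
    have hHLP : H * (L * P) = P := mul_mul_eq_self_of_range_mulVec_subset hLH hran.le
    refine ⟨L * P - L, ?_, ?_⟩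
    · rw [Matrix.sub_mul, Matrix.mul_assoc, hPH, hLH, sub_self]
    · rw [Matrix.mul_sub, hHLP, add_sub_cancel]
  · rintro ⟨A, hAH, rfl⟩
    have hMH : (L + A) * H = 1 := by rw [Matrix.add_mul, hLH, hAH, add_zero]
    rw [← Matrix.mul_add]
    refine ⟨?_, range_mulVec_mul_eq_of_mul_eq_one hMH⟩
    rw [Matrix.mul_assoc, ← Matrix.mul_assoc (L + A), hMH, Matrix.one_mul]

lemma mulVec_injective_fromRows_one {p : Type*} [DecidableEq n] [Semiring R]
    (B : Matrix p n R) : Function.Injective (fromRows (1 : Matrix n n R) B).mulVec := by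
  intro x y hxy
  simpa [fromRows_mulVec] using congrArg (fun v => v ∘ Sum.inl) hxy

lemma inv_transpose_mul_inv_mul_mul_eq_one [DecidableEq m] [DecidableEq n]
    {Sig : Matrix m m ℝ} (hSig : Sig.PosDef) {H : Matrix m n ℝ}
    (hH : Function.Injective H.mulVec) :
    (Hᵀ * Sig⁻¹ * H)⁻¹ * (Hᵀ * Sig⁻¹) * H = 1 := by
  have hG : (Hᵀ * Sig⁻¹ * H).PosDef := by
    simpa using hSig.inv.conjTranspose_mul_mul_same hH
  rw [Matrix.mul_assoc, nonsing_inv_mul _ ((isUnit_iff_isUnit_det _).mp hG.isUnit)]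

end Matrix

theorem stmt16_general (n p : ℕ)
    (Hsub : Matrix (Fin p) (Fin n) ℝ)
    (H : Matrix (Fin n ⊕ Fin p) (Fin n) ℝ) (hH : H = Matrix.fromRows 1 Hsub)
    (Sig : Matrix (Fin n ⊕ Fin p) (Fin n ⊕ Fin p) ℝ) (hSig : Sig.PosDef)
    (PS : Matrix (Fin n ⊕ Fin p) (Fin n ⊕ Fin p) ℝ)
    (hPS : PS = H * (Hᵀ * Sig⁻¹ * H)⁻¹ * (Hᵀ * Sig⁻¹))
    (P : Matrix (Fin n ⊕ Fin p) (Fin n ⊕ Fin p) ℝ) :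
    (P * P = P ∧ Set.range P.mulVec = Set.range H.mulVec) ↔
      ∃ A : Matrix (Fin n) (Fin n ⊕ Fin p) ℝ, A * H = 0 ∧ P = PS + H * A := by
  have hLH := inv_transpose_mul_inv_mul_mul_eq_one hSig
    (hH ▸ mulVec_injective_fromRows_one Hsub)
  rw [hPS, Matrix.mul_assoc]
  exact mul_self_eq_and_range_mulVec_eq_iff hLH

/-- A matrix `P` is a projection matrix onto `Im(H)` if and only if
`P = P_{Σ⁻¹} + H A` for some `n × m` matrix `A` with `A H = 0`. -/
theorem stmt16 (n p : ℕ) (hn : 2 ≤ n) (hp : 1 ≤ p)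
    (Hsub : Matrix (Fin p) (Fin n) ℝ)
    (H : Matrix (Fin n ⊕ Fin p) (Fin n) ℝ) (hH : H = Matrix.fromRows 1 Hsub)
    (Sig : Matrix (Fin n ⊕ Fin p) (Fin n ⊕ Fin p) ℝ) (hSig : Sig.PosDef)
    (PS : Matrix (Fin n ⊕ Fin p) (Fin n ⊕ Fin p) ℝ)
    (hPS : PS = H * (Hᵀ * Sig⁻¹ * H)⁻¹ * (Hᵀ * Sig⁻¹))
    (P : Matrix (Fin n ⊕ Fin p) (Fin n ⊕ Fin p) ℝ) :
    (P * P = P ∧ Set.range P.mulVec = Set.range H.mulVec) ↔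
      ∃ A : Matrix (Fin n) (Fin n ⊕ Fin p) ℝ, A * H = 0 ∧ P = PS + H * A :=
  stmt16_general n p Hsub H hH Sig hSig PS hPS P
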